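/- arXiv:2112.04165 — 3 statements merged into one kernel-verified Lean document; each statement's English description precedes it below -/
import Mathlib

section
/- For all n×n real doubly stochastic matrices M and X, the total entropy of the product satisfies H(M·X) ≥ H(M). -/
/-- Total entropy of a matrix: `H(A) = -∑ᵢⱼ Aᵢⱼ·log Aᵢⱼ` (with `0·log 0 = 0`). -/
noncomputable def totalEntropy {n : Type*} [Fintype n] (A : Matrix n n ℝ) : ℝ :=
  ∑ i, ∑ j, Real.negMulLog (A i j)

/-- For doubly stochastic matrices `M` and `X`, `H(M·X) ≥ H(M)`. -/
theorem totalEntropy_mul_ge {n : Type*} [Fintype n] [DecidableEq n]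
    (M X : Matrix n n ℝ) (hM : M ∈ doublyStochastic ℝ n) (hX : X ∈ doublyStochastic ℝ n) :
    totalEntropy (M * X) ≥ totalEntropy M := by
  unfold totalEntropy
  have key : ∀ i j, ∑ k, X k j * Real.negMulLog (M i k) ≤ Real.negMulLog ((M * X) i j) := by
    intro i j
    have h := Real.concaveOn_negMulLog.le_map_sum (t := Finset.univ)
      (w := fun k => X k j) (p := fun k => M i k)
      (fun k _ => nonneg_of_mem_doublyStochastic hX)
      (sum_col_of_mem_doublyStochastic hX j)
      (fun k _ => nonneg_of_mem_doublyStochastic hM)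
    simpa [Matrix.mul_apply, smul_eq_mul, mul_comm] using h
  calc ∑ i, ∑ j, Real.negMulLog (M i j)
      = ∑ i, ∑ j, ∑ k, X j k * Real.negMulLog (M i j) := by
        refine Finset.sum_congr rfl fun i _ => Finset.sum_congr rfl fun j _ => ?_
        rw [← Finset.sum_mul, sum_row_of_mem_doublyStochastic hX, one_mul]
    _ = ∑ i, ∑ j, ∑ k, X k j * Real.negMulLog (M i k) := by
        refine Finset.sum_congr rfl fun i _ => ?_
        exact Finset.sum_comm
    _ ≤ ∑ i, ∑ j, Real.negMulLog ((M * X) i j) := by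
        refine Finset.sum_le_sum fun i _ => Finset.sum_le_sum fun j _ => key i j
end

section
/- For any finite list L of n×n real doubly stochastic matrices and any prefix L' of L, the total entropy of the product of the prefix is at most the total entropy of the product of the full list: H(L'.prod) ≤ H(L.prod). -/
lemma totalEntropy_le_mul {n : Type*} [Fintype n] [DecidableEq n]
    (A B : Matrix n n ℝ) (hA : A ∈ doublyStochastic ℝ n) (hB : B ∈ doublyStochastic ℝ n) :
    totalEntropy A ≤ totalEntropy (A * B) := by
  unfold totalEntropy
  have key : ∀ i k, ∑ j, B j k * Real.negMulLog (A i j) ≤ Real.negMulLog ((A * B) i k) := by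
    intro i k
    have := Real.concaveOn_negMulLog.le_map_sum (t := Finset.univ)
      (w := fun j => B j k) (p := fun j => A i j)
      (fun j _ => nonneg_of_mem_doublyStochastic hB)
      (sum_col_of_mem_doublyStochastic hB k)
      (fun j _ => nonneg_of_mem_doublyStochastic hA)
    simpa [Matrix.mul_apply, smul_eq_mul, mul_comm] using this
  calc ∑ i, ∑ j, Real.negMulLog (A i j)
      = ∑ i, ∑ k, ∑ j, B j k * Real.negMulLog (A i j) := by
        congr 1; ext i
        rw [Finset.sum_comm]
        congr 1; ext j
        rw [← Finset.sum_mul, sum_row_of_mem_doublyStochastic hB j, one_mul]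
    _ ≤ ∑ i, ∑ k, Real.negMulLog ((A * B) i k) := by
        apply Finset.sum_le_sum; intro i _
        exact Finset.sum_le_sum fun k _ => key i k

/-- For a list `L` of doubly stochastic matrices and a prefix `L'` of `L`, the total entropy of
the product of the prefix is at most the total entropy of the product of the full list. -/
theorem totalEntropy_prod_prefix_le {n : Type*} [Fintype n] [DecidableEq n]
    (L : List (Matrix n n ℝ)) (hL : ∀ A ∈ L, A ∈ doublyStochastic ℝ n)
    (L' : List (Matrix n n ℝ)) (hL' : ∃ L'' : List (Matrix n n ℝ), L = L' ++ L'') :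
    totalEntropy L'.prod ≤ totalEntropy L.prod := by
  obtain ⟨L'', rfl⟩ := hL'
  have h1 : L'.prod ∈ doublyStochastic ℝ n :=
    Submonoid.list_prod_mem _ fun A hA => hL A (List.mem_append_left _ hA)
  have h2 : L''.prod ∈ doublyStochastic ℝ n :=
    Submonoid.list_prod_mem _ fun A hA => hL A (List.mem_append_right _ hA)
  rw [List.prod_append]
  exact totalEntropy_le_mul _ _ h1 h2
end

section
/- Abstract version of the monotonicity argument via Birkhoff's theorem: let f be a real-valued function on n×n real matrices that is concave on the set of matrices with nonnegative entries and invariant under right multiplication by permutation matrices (f(A·P_σ) = f(A) for all A with nonnegative entries and all permutations σ). Then for all n×n doubly stochastic matrices M and X, f(M·X) ≥ f(M). -/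
/-- **Abstract monotonicity via Birkhoff's theorem.** If `f` is concave on the set of
entrywise-nonnegative matrices and invariant under right multiplication by permutation matrices,
then for all doubly stochastic matrices `M` and `X`, `f(M·X) ≥ f(M)`. -/
theorem concave_perm_invariant_mul_ge {n : Type*} [Fintype n] [DecidableEq n]
    (f : Matrix n n ℝ → ℝ)
    (hconc : ConcaveOn ℝ {A : Matrix n n ℝ | ∀ i j, 0 ≤ A i j} f)
    (hinv : ∀ A : Matrix n n ℝ, (∀ i j, 0 ≤ A i j) →
      ∀ σ : Equiv.Perm n, f (A * σ.permMatrix ℝ) = f A)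
    (M X : Matrix n n ℝ) (hM : M ∈ doublyStochastic ℝ n) (hX : X ∈ doublyStochastic ℝ n) :
    f (M * X) ≥ f M := by
  obtain ⟨w, hw0, hw1, hwX⟩ := exists_eq_sum_perm_of_mem_doublyStochastic hX
  have hMnn : ∀ i j, 0 ≤ M i j := fun i j =>
    nonneg_of_mem_doublyStochastic hM
  have hmem : ∀ σ : Equiv.Perm n, M * σ.permMatrix ℝ ∈
      {A : Matrix n n ℝ | ∀ i j, 0 ≤ A i j} := by
    intro σ i j
    rw [Matrix.mul_apply]
    refine Finset.sum_nonneg fun k _ => mul_nonneg (hMnn i k) ?_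
    exact nonneg_of_mem_doublyStochastic (permMatrix_mem_doublyStochastic)
  have key : M * X = ∑ σ : Equiv.Perm n, w σ • (M * σ.permMatrix ℝ) := by
    rw [← hwX, Matrix.mul_sum]
    simp [Matrix.mul_smul]
  rw [key]
  calc f M = ∑ σ : Equiv.Perm n, w σ • f (M * σ.permMatrix ℝ) := by
        simp only [fun σ : Equiv.Perm n => hinv M hMnn σ, smul_eq_mul,
          ← Finset.sum_mul, hw1, one_mul]
    _ ≤ f (∑ σ : Equiv.Perm n, w σ • (M * σ.permMatrix ℝ)) :=
        hconc.le_map_sum (fun σ _ => hw0 σ) hw1 (fun σ _ => hmem σ)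
end
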